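/- Define Γ₁ := −1 + Σ_{n≥1} (1/(2n) − 1/(2n+1)), Γ₁(1;0) := Σ over pairs of integers n₀ > n₁ > 0 with n₀ and n₁ both even of (1/n₀ − 1/(n₀−1))·(1/n₁), and Γ₁(1;1) := Σ over pairs of integers n₀ > n₁ > 0 with n₀ even and n₁ odd of (1/n₀ − 1/(n₀+1))·(1/n₁); the double series converge absolutely. Then Γ₁ = −log 2 and Γ₁² + 2·Γ₁(1;1) − 2·Γ₁(1;0) = ζ(2) = π²/6. -/

import Mathlib

/-
Put `a k = (-1)^k / k` (`altInv`, so `a 0 = 0`) and `s M = ∑_{k<M} a k`. Then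
`s (2N+1) = H N - H (2N)` in harmonic numbers, so `s (2N+1) → -log 2`, and the partial sums of
the series in `Γ₁` are `1 + s (2N+2)`.

On the row `n₀ = m` (even), the summand of `Γ₁(1;0) - Γ₁(1;1)` is `(a m + a (m ∓ 1)) · a n₁`,
with `m - 1` for even `n₁` and `m + 1` for odd `n₁`. Summing rows `m < 2N+1`, this regroups
`∑_{m<2N+1} a m · s m` up to the error `a (2N+1) · ∑_{b<N} a (2b+1)`, a Cesàro mean of a null
sequence. Since `s M ^ 2 = ∑_{k<M} a k ^ 2 + 2 ∑_{m<M} a m · s m`, the double series equals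
`(log² 2 - ζ(2)) / 2`. Absolute convergence: for `n₁ < n₀` the summands are
`O(1 / (n₀² n₁)) ≤ O((n₀ n₁)^(-3/2))`.
-/

open scoped BigOperators

noncomputable section

/-- `Γ₁ = -1 + Σ_{n ≥ 1} (1/(2n) - 1/(2n+1))`. -/
def Gamma1 : ℝ := -1 + ∑' n : ℕ, (1 / (2 * ((n : ℝ) + 1)) - 1 / (2 * ((n : ℝ) + 1) + 1))

/-- The summand of `Γ₁(1;0)`: over pairs `n₀ > n₁ > 0` with `n₀, n₁` both even,
`(1/n₀ - 1/(n₀-1))·(1/n₁)`. -/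
def g10 (p : ℕ × ℕ) : ℝ :=
  if p.1 > p.2 ∧ p.2 > 0 ∧ 2 ∣ p.1 ∧ 2 ∣ p.2 then
    (1 / (p.1 : ℝ) - 1 / ((p.1 : ℝ) - 1)) * (1 / (p.2 : ℝ))
  else 0

/-- The summand of `Γ₁(1;1)`: over pairs `n₀ > n₁ > 0` with `n₀` even and `n₁` odd,
`(1/n₀ - 1/(n₀+1))·(1/n₁)`. -/
def g11 (p : ℕ × ℕ) : ℝ :=
  if p.1 > p.2 ∧ p.2 > 0 ∧ 2 ∣ p.1 ∧ ¬ 2 ∣ p.2 then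
    (1 / (p.1 : ℝ) - 1 / ((p.1 : ℝ) + 1)) * (1 / (p.2 : ℝ))
  else 0

open Filter Finset Real Topology

theorem Finset.sum_range_two_mul {M : Type*} [AddCommMonoid M] (f : ℕ → M) (N : ℕ) :
    ∑ k ∈ range (2 * N), f k = ∑ b ∈ range N, f (2 * b) + ∑ b ∈ range N, f (2 * b + 1) := by
  induction N with
  | zero => simp
  | succ N ih =>
    rw [Nat.mul_succ, sum_range_succ, sum_range_succ, ih, sum_range_succ, sum_range_succ]
    abel

theorem Finset.sq_sum_range {R : Type*} [CommSemiring R] (x : ℕ → R) (n : ℕ) :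
    (∑ k ∈ range n, x k) ^ 2
      = ∑ k ∈ range n, x k ^ 2 + 2 * ∑ m ∈ range n, x m * ∑ k ∈ range m, x k := by
  induction n with
  | zero => simp
  | succ n ih =>
    simp only [sum_range_succ, add_sq, ih]
    ring

section EvenRowTerm

variable {R : Type*} [CommSemiring R]

def evenRowTerm (a : ℕ → R) (p : ℕ × ℕ) : R :=
  if Even p.1 ∧ p.2 < p.1 then (a p.1 + a (if Even p.2 then p.1 - 1 else p.1 + 1)) * a p.2
  else 0

theorem evenRowTerm_of_le (a : ℕ → R) {m n : ℕ} (h : m ≤ n) : evenRowTerm a (m, n) = 0 :=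
  if_neg fun h' => (h.trans_lt h'.2).false

theorem evenRowTerm_two_mul_add_one (a : ℕ → R) (N n : ℕ) :
    evenRowTerm a (2 * N + 1, n) = 0 :=
  if_neg fun h => Nat.not_even_two_mul_add_one N h.1

theorem sum_range_evenRowTerm_two_mul (a : ℕ → R) (N : ℕ) :
    ∑ n ∈ range (2 * N), evenRowTerm a (2 * N, n)
      = (a (2 * N) + a (2 * N - 1)) * ∑ b ∈ range N, a (2 * b)
        + (a (2 * N) + a (2 * N + 1)) * ∑ b ∈ range N, a (2 * b + 1) := by
  rw [sum_range_two_mul, mul_sum, mul_sum]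
  congr 1 <;> refine sum_congr rfl fun b hb => ?_ <;> rw [mem_range] at hb
  · simp [evenRowTerm, hb]
  · simp [evenRowTerm]
    omega

theorem sum_range_sum_range_evenRowTerm (a : ℕ → R) (N : ℕ) :
    ∑ m ∈ range (2 * N + 1), ∑ n ∈ range m, evenRowTerm a (m, n)
      = ∑ m ∈ range (2 * N + 1), a m * ∑ k ∈ range m, a k
        + a (2 * N + 1) * ∑ b ∈ range N, a (2 * b + 1) := by
  induction N with
  | zero => simp [evenRowTerm]
  | succ N ih =>
    have h2 : 2 * (N + 1) = 2 * N + 1 + 1 := by ring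
    rw [h2, sum_range_succ, sum_range_succ, ih, ← h2, sum_range_evenRowTerm_two_mul]
    simp only [evenRowTerm_two_mul_add_one, sum_const_zero, add_zero, sum_range_succ, h2,
      Nat.add_sub_cancel, sum_range_two_mul a N]
    ring

end EvenRowTerm

theorem HasSum.tendsto_sum_range_sum_range {α : Type*} [AddCommMonoid α] [TopologicalSpace α]
    [ContinuousAdd α] [RegularSpace α] {f : ℕ × ℕ → α} {a : α} (hf : HasSum f a)
    (hlow : ∀ m n, m ≤ n → f (m, n) = 0) :
    Tendsto (fun M => ∑ m ∈ range M, ∑ n ∈ range m, f (m, n)) atTop (𝓝 a) :=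
  (hf.prod_fiberwise fun m => hasSum_sum_of_ne_finset_zero (s := range m) fun n hn =>
    hlow m n (by simpa using hn)).tendsto_sum_nat

theorem summable_of_abs_le_div_sq_mul {f : ℕ × ℕ → ℝ} {C : ℝ}
    (hf : ∀ m n, f (m, n) ≠ 0 → 0 < n ∧ n < m ∧ |f (m, n)| ≤ C / (m ^ 2 * n)) :
    Summable f := by
  set w : ℕ → ℝ := fun k => ((k : ℝ) ^ (3 / 2 : ℝ))⁻¹
  have hw : Summable w := Real.summable_nat_rpow_inv.mpr (by norm_num)
  have hw0 : ∀ k, 0 ≤ w k := fun k => by positivity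
  have hpow : ∀ k : ℕ, (k : ℝ) ^ (3 / 2 : ℝ) = k * √k := fun k => by
    rw [show (3 / 2 : ℝ) = 1 + 1 / 2 by norm_num, rpow_add' (by positivity) (by norm_num),
      rpow_one, sqrt_eq_rpow]
  refine (hw.mul_of_nonneg hw hw0 hw0).mul_left |C| |>.of_norm_bounded fun ⟨m, n⟩ => ?_
  by_cases h : f (m, n) = 0
  · simp only [h, norm_zero]
    positivity
  obtain ⟨hn, hnm, hle⟩ := hf m n h
  have hm' : (0 : ℝ) < m := Nat.cast_pos.mpr (hn.trans hnm)
  -- `(m n)^(3/2) = m n √(m n) ≤ m² n` because `n ≤ m`.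
  have hsqrt : √m * √n ≤ m := by
    have := sqrt_le_sqrt (Nat.cast_le.mpr hnm.le : (n : ℝ) ≤ m)
    nlinarith [mul_self_sqrt hm'.le, sqrt_nonneg (m : ℝ), sqrt_nonneg (n : ℝ)]
  have key : 1 / ((m : ℝ) ^ 2 * n) ≤ w m * w n := by
    simp only [w, hpow, ← mul_inv, one_div]
    apply inv_anti₀ (by positivity)
    nlinarith [mul_le_mul_of_nonneg_left hsqrt (by positivity : (0 : ℝ) ≤ m * n)]
  calc ‖f (m, n)‖ = |f (m, n)| := Real.norm_eq_abs _
    _ ≤ C / (m ^ 2 * n) := hle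
    _ ≤ |C| * (1 / (m ^ 2 * n)) := by
      rw [mul_one_div]
      gcongr
      exact le_abs_self C
    _ ≤ |C| * (w m * w n) := by gcongr

theorem abs_one_div_sub_one_div_add_mul_le {x d y : ℝ} (hx : 2 ≤ x) (hd : |d| ≤ 1) (hy : 0 ≤ y) :
    |(1 / x - 1 / (x + d)) * (1 / y)| ≤ 2 / (x ^ 2 * y) := by
  have hx0 : 0 < x := by linarith
  have hxd0 : 0 < x + d := by linarith [neg_abs_le d]
  have hdiff : |1 / x - 1 / (x + d)| ≤ 2 / x ^ 2 := by
    rw [div_sub_div _ _ hx0.ne' hxd0.ne', abs_div, abs_of_pos (mul_pos hx0 hxd0),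
      div_le_div_iff₀ (mul_pos hx0 hxd0) (by positivity)]
    simp only [one_mul, mul_one, add_sub_cancel_left]
    nlinarith [abs_nonneg d, neg_abs_le d]
  calc |(1 / x - 1 / (x + d)) * (1 / y)| = |1 / x - 1 / (x + d)| * (1 / y) := by
        rw [abs_mul, abs_of_nonneg (one_div_nonneg.mpr hy)]
    _ ≤ 2 / x ^ 2 * (1 / y) := by gcongr
    _ = 2 / (x ^ 2 * y) := by rw [div_mul_div_comm, mul_one]

def altInv (k : ℕ) : ℝ := (-1) ^ k / k

theorem altInv_of_even {k : ℕ} (hk : Even k) : altInv k = 1 / k := by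
  simp [altInv, hk.neg_one_pow]

theorem altInv_of_odd {k : ℕ} (hk : Odd k) : altInv k = -(1 / k) := by
  simp [altInv, hk.neg_one_pow, neg_div]

theorem sum_range_two_mul_add_one_altInv (N : ℕ) :
    ∑ k ∈ range (2 * N + 1), altInv k = harmonic N - harmonic (2 * N) := by
  induction N with
  | zero => simp [altInv]
  | succ N ih =>
    rw [show 2 * (N + 1) + 1 = 2 * N + 1 + 1 + 1 by ring, sum_range_succ, sum_range_succ, ih,
      show 2 * N + 1 + 1 = 2 * (N + 1) by ring, altInv_of_even (even_two_mul _),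
      altInv_of_odd (odd_two_mul_add_one _), harmonic_succ,
      show 2 * (N + 1) = 2 * N + 1 + 1 by ring, harmonic_succ, harmonic_succ]
    push_cast
    field_simp
    ring

theorem tendsto_harmonic_two_mul_sub_harmonic :
    Tendsto (fun N : ℕ => (harmonic (2 * N) : ℝ) - harmonic N) atTop (𝓝 (log 2)) := by
  have h2N : Tendsto (fun N : ℕ => 2 * N) atTop atTop :=
    tendsto_id.const_mul_atTop' two_pos
  have := ((tendsto_harmonic_sub_log.comp h2N).sub tendsto_harmonic_sub_log).const_add (log 2)
  rw [sub_self, add_zero] at this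
  refine this.congr' ?_
  filter_upwards [eventually_ne_atTop 0] with N hN
  simp [log_mul two_ne_zero (Nat.cast_ne_zero.mpr hN)]
  ring

theorem tendsto_sum_range_two_mul_add_one_altInv :
    Tendsto (fun N : ℕ => ∑ k ∈ range (2 * N + 1), altInv k) atTop (𝓝 (-log 2)) := by
  simpa [sum_range_two_mul_add_one_altInv] using tendsto_harmonic_two_mul_sub_harmonic.neg

theorem tendsto_altInv_mul_sum_range_altInv :
    Tendsto (fun N : ℕ => altInv (2 * N + 1) * ∑ b ∈ range N, altInv (2 * b + 1)) atTop (𝓝 0) := by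
  simp only [altInv_of_odd (odd_two_mul_add_one _), sum_neg_distrib, neg_mul_neg]
  -- Compare with the Cesàro means of `1 / (b + 1)`.
  refine squeeze_zero (fun N => by positivity) (fun N => ?_)
    tendsto_one_div_add_atTop_nhds_zero_nat.cesaro
  rcases N with _ | N
  · simp
  rw [← one_div]
  gcongr with b
  · linarith
  · push_cast; linarith

theorem tendsto_inv_two_mul_add_one :
    Tendsto (fun N : ℕ => (2 * (N : ℝ) + 1)⁻¹) atTop (𝓝 0) :=
  tendsto_inv_atTop_zero.comp <| tendsto_atTop_add_const_right _ 1 <|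
    tendsto_natCast_atTop_atTop.const_mul_atTop two_pos

theorem sum_range_gamma1_term (N : ℕ) :
    ∑ n ∈ range N, (1 / (2 * ((n : ℝ) + 1)) - 1 / (2 * ((n : ℝ) + 1) + 1))
      = 1 + ∑ k ∈ range (2 * N + 1), altInv k - (2 * (N : ℝ) + 1)⁻¹ := by
  induction N with
  | zero => simp [altInv]
  | succ N ih =>
    rw [sum_range_succ, ih, show 2 * (N + 1) + 1 = 2 * N + 1 + 1 + 1 by ring,
      sum_range_succ altInv (2 * N + 1 + 1), sum_range_succ altInv (2 * N + 1),
      show 2 * N + 1 + 1 = 2 * (N + 1) by ring, altInv_of_even (even_two_mul _),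
      altInv_of_odd (odd_two_mul_add_one _)]
    push_cast
    field_simp
    ring

theorem gamma1_eq : Gamma1 = -log 2 := by
  have hterm : ∀ n : ℕ, 0 ≤ 1 / (2 * ((n : ℝ) + 1)) - 1 / (2 * ((n : ℝ) + 1) + 1) := fun n =>
    sub_nonneg.mpr <| one_div_le_one_div_of_le (by positivity) (by linarith)
  have hsum := (hasSum_iff_tendsto_nat_of_nonneg hterm (1 - log 2)).mpr <| by
    simp only [sum_range_gamma1_term]
    simpa [sub_eq_add_neg] using
      (tendsto_sum_range_two_mul_add_one_altInv.const_add 1).sub tendsto_inv_two_mul_add_one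
  rw [Gamma1, hsum.tsum_eq]
  ring

theorem summable_g10 : Summable g10 := by
  refine summable_of_abs_le_div_sq_mul (C := 2) fun m n h => ?_
  have hc : m > n ∧ n > 0 ∧ 2 ∣ m ∧ 2 ∣ n := by_contra fun hc => h (if_neg hc)
  refine ⟨hc.2.1, hc.1, ?_⟩
  rw [g10, if_pos hc, sub_eq_add_neg (m : ℝ)]
  exact abs_one_div_sub_one_div_add_mul_le (by norm_cast; omega) (by simp) n.cast_nonneg

theorem summable_g11 : Summable g11 := by
  refine summable_of_abs_le_div_sq_mul (C := 2) fun m n h => ?_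
  have hc : m > n ∧ n > 0 ∧ 2 ∣ m ∧ ¬ 2 ∣ n := by_contra fun hc => h (if_neg hc)
  refine ⟨hc.2.1, hc.1, ?_⟩
  rw [g11, if_pos hc]
  exact abs_one_div_sub_one_div_add_mul_le (by norm_cast; omega) (by simp) n.cast_nonneg

theorem g10_sub_g11 (p : ℕ × ℕ) : g10 p - g11 p = evenRowTerm altInv p := by
  obtain ⟨m, n⟩ := p
  simp only [g10, g11, evenRowTerm, ← even_iff_two_dvd]
  by_cases hrow : Even m ∧ n < m
  swap
  · rw [if_neg hrow, if_neg fun h => hrow ⟨h.2.2.1, h.1⟩, if_neg fun h => hrow ⟨h.2.2.1, h.1⟩,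
      sub_zero]
  obtain ⟨hm, hnm⟩ := hrow
  rcases Nat.eq_zero_or_pos n with rfl | hn
  · simp [altInv]
  rcases Nat.even_or_odd n with hn2 | hn2
  · have hm1 : Odd (m - 1) := Nat.Even.sub_odd (by omega) hm odd_one
    simp only [hm, hnm, hn, hn2, and_self, not_true_eq_false, and_false, if_true,
      if_false, sub_zero, altInv_of_even, altInv_of_odd hm1, Nat.cast_sub (by omega : 1 ≤ m)]
    push_cast
    ring
  · have hn2' : ¬ Even n := Nat.not_even_iff_odd.mpr hn2
    simp only [hm, hnm, hn, hn2', and_self, not_false_eq_true, and_false, if_true,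
      if_false, zero_sub, altInv_of_even hm, altInv_of_odd hm.add_one, altInv_of_odd hn2]
    push_cast
    ring

theorem tsum_g10_sub_tsum_g11 :
    ∑' p, g10 p - ∑' p, g11 p = (log 2 ^ 2 - π ^ 2 / 6) / 2 := by
  have hsum : HasSum (evenRowTerm altInv) (∑' p, g10 p - ∑' p, g11 p) := by
    simpa [g10_sub_g11] using summable_g10.hasSum.sub summable_g11.hasSum
  have hodd : Tendsto (fun N : ℕ => 2 * N + 1) atTop atTop :=
    tendsto_atTop_mono (fun N => by simp only [id]; omega) tendsto_id
  have hsq : Tendsto (fun N : ℕ => ∑ k ∈ range (2 * N + 1), altInv k ^ 2) atTop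
      (𝓝 (π ^ 2 / 6)) := by
    have : ∀ k, altInv k ^ 2 = 1 / (k : ℝ) ^ 2 := fun k => by
      rw [altInv, div_pow, ← pow_mul, mul_comm, pow_mul]
      simp
    simp only [this]
    exact hasSum_zeta_two.tendsto_sum_nat.comp hodd
  have hQ : ∀ M, ∑ m ∈ range M, altInv m * ∑ k ∈ range m, altInv k
      = ((∑ k ∈ range M, altInv k) ^ 2 - ∑ k ∈ range M, altInv k ^ 2) / 2 := fun M => by
    rw [sq_sum_range]
    ring
  have hlim := (((tendsto_sum_range_two_mul_add_one_altInv.pow 2).sub hsq).div_const 2).add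
    tendsto_altInv_mul_sum_range_altInv
  rw [neg_sq, add_zero] at hlim
  refine tendsto_nhds_unique ((hsum.tendsto_sum_range_sum_range fun m n =>
    evenRowTerm_of_le altInv).comp hodd) (hlim.congr fun N => ?_)
  simp only [Function.comp_apply, sum_range_sum_range_evenRowTerm, hQ]

theorem stmt_18 :
    Summable g10 ∧ Summable g11 ∧
    Gamma1 = -Real.log 2 ∧
    Gamma1 ^ 2 + 2 * (∑' p : ℕ × ℕ, g11 p) - 2 * (∑' p : ℕ × ℕ, g10 p) = Real.pi ^ 2 / 6 := by
  refine ⟨summable_g10, summable_g11, gamma1_eq, ?_⟩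
  rw [gamma1_eq]
  linear_combination (-2) * tsum_g10_sub_tsum_g11
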